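/- arXiv:0704.2560 — 2 statements merged into one kernel-verified Lean document; each statement's English description precedes it below -/
import Mathlib

section
/- (Time-reversal invariance.) Let d ≥ 3 and K ⊆ ℤ^d finite, and for w ∈ W^0_K let L_K(w) = sup{n ≥ 0 : w(n) ∈ K}. The map w ↦ ŵ defined by ŵ(n) = w(L_K(w) − n) for n ∈ ℤ maps W^0_K into itself, and the image of Q_K under this map equals Q_K. -/
/-!
The formula defining `Q_K`, together with the Markov property of the walk at a fixed time,
computes the `Q_K`-mass of `{X_m = γ m for -n ≤ m ≤ ℓ + n} ∩ W^0_K ∩ {L_K = ℓ}`: it is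
`(2d)^{-(ℓ+2n)} e_K(γ(-n)) e_K(γ(ℓ+n))` when `γ` is a nearest-neighbour path on the window that
lies in `K` at times `0` and `ℓ` and outside `K` at the other times of `[-n, 0) ∪ (ℓ, ℓ + n]`,
and `0` otherwise. This is invariant under `γ ↦ γ(ℓ - ·)`, and these cylinders form a
π-system generating the σ-algebra, so the restriction of `Q_K` to `{L_K = ℓ}` is invariant
under the reflection `w ↦ w(ℓ - ·)`, which is `w ↦ ŵ` there. Summing over `ℓ` gives the claim,
because `Q_K` is carried by `W^0_K`, the disjoint union of the sets `W^0_K ∩ {L_K = ℓ}`.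
-/

open MeasureTheory
open scoped ENNReal

abbrev Zd (d : ℕ) := Fin d → ℤ

def adj {d : ℕ} (x y : Zd d) : Prop := (∑ i, (x i - y i).natAbs) = 1

instance {d : ℕ} (x y : Zd d) : Decidable (adj x y) := by
  unfold adj; infer_instance

lemma adj_symm {d : ℕ} {x y : Zd d} (h : adj x y) : adj y x := by
  unfold adj at h ⊢
  calc ∑ i, (y i - x i).natAbs = ∑ i, (x i - y i).natAbs :=
        Finset.sum_congr rfl (fun i _ => by omega)
    _ = 1 := h

def IsSRW (d : ℕ) (P : Zd d → Measure (ℕ → Zd d)) : Prop :=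
  (∀ x, IsProbabilityMeasure (P x)) ∧
  ∀ (x : Zd d) (N : ℕ) (γ : ℕ → Zd d), γ 0 = x →
    P x {w | ∀ k ≤ N, w k = γ k} =
      if ∀ k < N, adj (γ (k + 1)) (γ k) then ((2 * d : ℝ≥0∞))⁻¹ ^ N else 0

def escSet (d : ℕ) (K : Finset (Zd d)) : Set (ℕ → Zd d) :=
  {ω | ∀ n : ℕ, 1 ≤ n → ω n ∉ K}

def goodPath (d : ℕ) : Set (ℤ → Zd d) :=
  {w | (∀ n : ℤ, adj (w (n + 1)) (w n)) ∧ ∀ A : Finset (Zd d), {n : ℤ | w n ∈ A}.Finite}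

abbrev WT (d : ℕ) := {w : ℤ → Zd d // w ∈ goodPath d}

def IsQK (d : ℕ) (P : Zd d → Measure (ℕ → Zd d)) (K : Finset (Zd d))
    (Q : Measure (WT d)) : Prop :=
  ∀ (x : Zd d) (A B : Set (ℕ → Zd d)), MeasurableSet A → MeasurableSet B →
    Q {w : WT d | (fun n : ℕ => w.1 (-(n : ℤ))) ∈ A ∧ w.1 0 = x ∧
        (fun n : ℕ => w.1 (n : ℤ)) ∈ B}
      = if x ∈ K then P x (A ∩ escSet d K) * P x B else 0

/-- `L_K(w) = sup{n ≥ 0 : w(n) ∈ K}` (junk value `0` if this set is empty or unbounded). -/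
noncomputable def lastTime (d : ℕ) (K : Finset (Zd d)) (w : WT d) : ℕ :=
  sSup {n : ℕ | w.1 (n : ℤ) ∈ K}

/-- The time-reversal map `w ↦ ŵ`, `ŵ(n) = w(L_K(w) − n)`. -/
noncomputable def revAt (d : ℕ) (K : Finset (Zd d)) (w : WT d) : WT d :=
  ⟨fun n => w.1 ((lastTime d K w : ℤ) - n), by
    constructor
    · intro n
      show adj (w.1 ((lastTime d K w : ℤ) - (n + 1))) (w.1 ((lastTime d K w : ℤ) - n))
      have h := w.2.1 ((lastTime d K w : ℤ) - (n + 1))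
      have e : (lastTime d K w : ℤ) - (n + 1) + 1 = (lastTime d K w : ℤ) - n := by ring
      rw [e] at h
      exact adj_symm h
    · intro A
      have h : {n : ℤ | w.1 ((lastTime d K w : ℤ) - n) ∈ A}
          = (fun n : ℤ => (lastTime d K w : ℤ) - n) ⁻¹' {n : ℤ | w.1 n ∈ A} := rfl
      rw [h]
      exact (w.2.2 A).preimage (Set.injOn_of_injective (fun a b hab => by omega))⟩

open Set

section PointCylinders

variable {ι α : Type*}

def pointCylinders (s : ℕ → Set ι) : Set (Set (ι → α)) :=
  {t | ∃ n, ∃ γ : ι → α, t = (s n).pi fun i => {γ i}}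

lemma pi_singleton_eq_of_mem {s : Set ι} {γ w : ι → α} (hw : w ∈ s.pi fun i => {γ i}) :
    (s.pi fun i => {γ i}) = s.pi fun i => {w i} :=
  pi_congr rfl fun i hi => by rw [hw i hi]

lemma isPiSystem_pointCylinders {s : ℕ → Set ι} (hs : Monotone s) :
    IsPiSystem (pointCylinders s : Set (Set (ι → α))) := by
  rintro _ ⟨n, γ, rfl⟩ _ ⟨m, γ', rfl⟩ ⟨w, hw, hw'⟩
  refine ⟨max n m, w, ?_⟩
  have hmax : s n ∪ s m = s (max n m) := by
    rcases le_total n m with h | h <;> simp [h, hs h]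
  rw [pi_singleton_eq_of_mem hw, pi_singleton_eq_of_mem hw', ← union_pi, hmax]

variable [MeasurableSpace α] [Countable ι] [MeasurableSingletonClass α]

lemma measurableSet_pi_singleton (s : Set ι) (γ : ι → α) :
    MeasurableSet (s.pi fun i => {γ i}) :=
  .pi (to_countable s) fun i _ => measurableSet_singleton (γ i)

variable [Countable α]

lemma generateFrom_pointCylinders {s : ℕ → Set ι} (hfin : ∀ n, (s n).Finite)
    (hcover : ∀ i, ∃ n, i ∈ s n) :
    MeasurableSpace.generateFrom (pointCylinders s) =
      (MeasurableSpace.pi : MeasurableSpace (ι → α)) := by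
  refine le_antisymm (MeasurableSpace.generateFrom_le ?_) ?_
  · rintro _ ⟨n, γ, rfl⟩
    exact measurableSet_pi_singleton _ γ
  refine iSup_le fun i => (@measurable_to_countable' α _ _ _
    (MeasurableSpace.generateFrom (pointCylinders s)) (fun w => w i) fun y => ?_).comap_le
  obtain ⟨n, hi⟩ := hcover i
  have : Finite (s n) := (hfin n).to_subtype
  have hunion : (fun w : ι → α => w i) ⁻¹' {y} =
      ⋃₀ ((fun w : ι → α => (s n).pi fun j => {w j}) '' {w | w i = y}) := by
    ext w
    refine ⟨fun hw => ⟨_, ⟨w, hw, rfl⟩, fun j _ => rfl⟩, ?_⟩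
    rintro ⟨_, ⟨w', hw', rfl⟩, hw⟩
    exact (hw i hi).trans hw'
  have hcount : ((fun w : ι → α => (s n).pi fun j => {w j}) '' {w | w i = y}).Countable := by
    refine (countable_range fun p : s n → α => {w : ι → α | ∀ j : s n, w j = p j}).mono ?_
    rintro _ ⟨w, -, rfl⟩
    refine ⟨fun j => w j, ?_⟩
    ext w'
    simp [Set.mem_pi]
  rw [hunion]
  exact .sUnion hcount fun t ⟨w, _, ht⟩ => .basic _ ⟨n, w, ht.symm⟩

lemma MeasureTheory.Measure.ext_of_pointCylinders {s : ℕ → Set ι} (hs : Monotone s)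
    (hfin : ∀ n, (s n).Finite) (hcover : ∀ i, ∃ n, i ∈ s n) {μ ν : Measure (ι → α)}
    [IsFiniteMeasure μ]
    (h : ∀ n (γ : ι → α), μ ((s n).pi fun i => {γ i}) = ν ((s n).pi fun i => {γ i}))
    (huniv : μ univ = ν univ) : μ = ν :=
  ext_of_generate_finite _ (generateFrom_pointCylinders hfin hcover).symm
    (isPiSystem_pointCylinders hs) (by rintro _ ⟨n, γ, rfl⟩; exact h n γ) huniv

end PointCylinders

lemma MeasureTheory.Measure.map_subtype_val_injective {α : Type*} [MeasurableSpace α]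
    {p : α → Prop} : Function.Injective (Measure.map (Subtype.val : Subtype p → α)) := by
  intro μ ν h
  ext _ ⟨T, hT, rfl⟩
  rw [← map_apply measurable_subtype_coe hT, h, map_apply measurable_subtype_coe hT]

lemma Nat.forall_le_add_iff {p : ℕ → Prop} {N M : ℕ} :
    (∀ k ≤ N + M, p k) ↔ (∀ k ≤ N, p k) ∧ ∀ j ≤ M, p (N + j) := by
  refine ⟨fun h => ⟨fun k hk => h k (by omega), fun j hj => h _ (by omega)⟩, ?_⟩
  rintro ⟨h₁, h₂⟩ k hk
  rcases le_total k N with hkN | hkN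
  · exact h₁ k hkN
  · obtain ⟨j, rfl⟩ := Nat.exists_eq_add_of_le hkN
    exact h₂ j (by omega)

lemma Nat.forall_lt_add_iff {p : ℕ → Prop} {N M : ℕ} :
    (∀ k < N + M, p k) ↔ (∀ k < N, p k) ∧ ∀ j < M, p (N + j) := by
  refine ⟨fun h => ⟨fun k hk => h k (by omega), fun j hj => h _ (by omega)⟩, ?_⟩
  rintro ⟨h₁, h₂⟩ k hk
  rcases lt_or_ge k N with hkN | hkN
  · exact h₁ k hkN
  · obtain ⟨j, rfl⟩ := Nat.exists_eq_add_of_le hkN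
    exact h₂ j (by omega)

lemma Int.forall_mem_Icc_neg_iff {p : ℤ → Prop} (a b : ℕ) :
    (∀ m ∈ Icc (-(a : ℤ)) b, p m) ↔ (∀ k ≤ a, p (-k)) ∧ ∀ k ≤ b, p k := by
  refine ⟨fun h => ⟨fun k hk => h _ ⟨by omega, by omega⟩, fun k hk => h _ ⟨by omega, by omega⟩⟩,
    fun ⟨h₁, h₂⟩ m ⟨hm₁, hm₂⟩ => ?_⟩
  rcases le_total 0 m with hm | hm
  · obtain ⟨k, rfl⟩ := Int.eq_ofNat_of_zero_le hm
    exact h₂ k (by omega)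
  · obtain ⟨k, rfl⟩ := Int.exists_eq_neg_ofNat hm
    exact h₁ k (by omega)

lemma Int.forall_mem_Ico_neg_iff {p : ℤ → Prop} (a b : ℕ) :
    (∀ m ∈ Ico (-(a : ℤ)) b, p m) ↔ (∀ k < a, p (-(k + 1))) ∧ ∀ k < b, p k := by
  refine ⟨fun h => ⟨fun k hk => h _ ⟨by omega, by omega⟩, fun k hk => h _ ⟨by omega, by omega⟩⟩,
    fun ⟨h₁, h₂⟩ m ⟨hm₁, hm₂⟩ => ?_⟩
  rcases lt_or_ge m 0 with hm | hm
  · obtain ⟨k, hk⟩ := Int.exists_eq_neg_ofNat (show m + 1 ≤ 0 by omega)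
    obtain rfl : m = -(k + 1) := by omega
    exact h₁ k (by omega)
  · obtain ⟨k, rfl⟩ := Int.eq_ofNat_of_zero_le hm
    exact h₂ k (by omega)

section Concatenation

variable {α : Type*}

def pathShift (N : ℕ) (ω : ℕ → α) : ℕ → α := fun n => ω (N + n)

lemma measurable_pathShift [MeasurableSpace α] (N : ℕ) : Measurable (pathShift (α := α) N) :=
  measurable_pi_lambda _ fun n => measurable_pi_apply (N + n)

def pathAppend (σ : ℕ → α) (N : ℕ) (δ : ℕ → α) : ℕ → α :=
  fun k => if k < N then σ k else δ (k - N)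

variable {σ δ : ℕ → α} {N : ℕ}

lemma pathAppend_of_le (hδ : δ 0 = σ N) {k : ℕ} (hk : k ≤ N) : pathAppend σ N δ k = σ k := by
  rcases hk.lt_or_eq with hk | rfl
  · exact if_pos hk
  · simp [pathAppend, hδ]

lemma pathAppend_add (j : ℕ) : pathAppend σ N δ (N + j) = δ j := by
  simp [pathAppend]

lemma pi_Iic_inter_preimage_pathShift (hδ : δ 0 = σ N) (M : ℕ) :
    (Iic N).pi (fun k => {σ k}) ∩ pathShift N ⁻¹' (Iic M).pi (fun k => {δ k}) =
      (Iic (N + M)).pi fun k => {pathAppend σ N δ k} := by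
  ext ω
  simp only [mem_inter_iff, mem_preimage, mem_pi, mem_Iic, mem_singleton_iff, pathShift]
  rw [Nat.forall_le_add_iff]
  exact and_congr (forall₂_congr fun k hk => by rw [pathAppend_of_le hδ hk])
    (forall₂_congr fun j _ => by rw [pathAppend_add])

end Concatenation

section SimpleRandomWalk

variable {d : ℕ}

lemma adj_comm {x y : Zd d} : adj x y ↔ adj y x := ⟨adj_symm, adj_symm⟩

lemma forall_adj_pathAppend {σ δ : ℕ → Zd d} {N : ℕ} (hδ : δ 0 = σ N) (M : ℕ) :
    (∀ k < N + M, adj (pathAppend σ N δ (k + 1)) (pathAppend σ N δ k)) ↔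
      (∀ k < N, adj (σ (k + 1)) (σ k)) ∧ ∀ k < M, adj (δ (k + 1)) (δ k) := by
  rw [Nat.forall_lt_add_iff]
  exact and_congr
    (forall₂_congr fun k hk => by rw [pathAppend_of_le hδ hk, pathAppend_of_le hδ hk.le])
    (forall₂_congr fun j _ => by rw [add_assoc, pathAppend_add, pathAppend_add])

variable {P : Zd d → Measure (ℕ → Zd d)}

lemma IsSRW.ae_eval_zero (hP : IsSRW d P) (x : Zd d) : ∀ᵐ ω ∂P x, ω 0 = x := by
  have := hP.1 x
  have h : P x {ω | ω 0 = x} = 1 := by simpa using hP.2 x 0 (fun _ => x) rfl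
  have hmeas : MeasurableSet {ω : ℕ → Zd d | ω 0 = x} :=
    measurableSet_eq_fun (measurable_pi_apply 0) measurable_const
  exact (ae_iff_measure_eq hmeas.nullMeasurableSet).mpr (by rw [h, measure_univ])

lemma IsSRW.measure_pi_Iic (hP : IsSRW d P) (x : Zd d) (γ : ℕ → Zd d) (N : ℕ) :
    P x ((Iic N).pi fun k => {γ k}) =
      if γ 0 = x ∧ ∀ k < N, adj (γ (k + 1)) (γ k) then (2 * d : ℝ≥0∞)⁻¹ ^ N else 0 := by
  by_cases hγ : γ 0 = x
  · simp only [hγ, true_and]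
    exact hP.2 x N γ hγ
  · rw [if_neg (fun h => hγ h.1)]
    refine measure_mono_null (fun ω hω => ?_) (ae_iff.mp (hP.ae_eval_zero x))
    exact fun h => hγ ((hω 0 (Nat.zero_le _)).symm.trans h)

theorem IsSRW.measure_pi_Iic_inter_preimage_pathShift (hP : IsSRW d P) {x : Zd d}
    {σ : ℕ → Zd d} (hσ : σ 0 = x) (N : ℕ) {D : Set (ℕ → Zd d)} (hD : MeasurableSet D) :
    P x ((Iic N).pi (fun k => {σ k}) ∩ pathShift N ⁻¹' D) =
      (if ∀ k < N, adj (σ (k + 1)) (σ k) then (2 * d : ℝ≥0∞)⁻¹ ^ N else 0) * P (σ N) D := by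
  have := hP.1 x
  have := hP.1 (σ N)
  by_cases hσN : ∀ k < N, adj (σ (k + 1)) (σ k)
  swap
  · have hC : P x ((Iic N).pi fun k => {σ k}) = 0 := by simp [hP.measure_pi_Iic, hσN]
    simp [hσN, measure_mono_null inter_subset_left hC]
  suffices h : ((P x).restrict ((Iic N).pi fun k => {σ k})).map (pathShift N) =
      (2 * d : ℝ≥0∞)⁻¹ ^ N • P (σ N) by
    rw [if_pos hσN, ← smul_eq_mul, ← Measure.smul_apply, ← h,
      Measure.map_apply (measurable_pathShift N) hD,
      Measure.restrict_apply (measurable_pathShift N hD), inter_comm]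
  refine Measure.ext_of_pointCylinders (s := Iic) (fun _ _ => Iic_subset_Iic.mpr)
    (fun n => finite_Iic n) (fun i => ⟨i, mem_Iic.mpr le_rfl⟩) (fun M δ => ?_) ?_
  · rw [Measure.map_apply (measurable_pathShift N) (measurableSet_pi_singleton _ _),
      Measure.restrict_apply (measurable_pathShift N (measurableSet_pi_singleton _ _)),
      inter_comm, Measure.smul_apply, smul_eq_mul, hP.measure_pi_Iic]
    by_cases hδ : δ 0 = σ N
    · rw [pi_Iic_inter_preimage_pathShift hδ, hP.measure_pi_Iic]
      simp only [forall_adj_pathAppend hδ, pathAppend_of_le hδ (Nat.zero_le _)]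
      simp [hσ, hδ, eq_true hσN, pow_add]
    · have hempty :
          (Iic N).pi (fun k => {σ k}) ∩ pathShift N ⁻¹' (Iic M).pi (fun k => {δ k}) = ∅ :=
        eq_empty_of_forall_notMem fun ω ⟨h₁, h₂⟩ =>
          hδ ((h₂ 0 (Nat.zero_le _)).symm.trans (h₁ N (mem_Iic.mpr le_rfl)))
      simp [hempty, hδ]
  · rw [Measure.map_apply (measurable_pathShift N) MeasurableSet.univ, preimage_univ,
      Measure.restrict_apply_univ, hP.measure_pi_Iic, if_pos ⟨hσ, hσN⟩, Measure.smul_apply,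
      measure_univ, smul_eq_mul, mul_one]

end SimpleRandomWalk

section TimeReflection

variable {α : Type*}

def timeReflect (t : ℤ) (f : ℤ → α) : ℤ → α := fun m => f (t - m)

lemma measurable_timeReflect [MeasurableSpace α] (t : ℤ) : Measurable (timeReflect (α := α) t) :=
  measurable_pi_lambda _ fun m => measurable_pi_apply (t - m)

lemma preimage_timeReflect_pi_Icc (γ : ℤ → α) (ℓ n : ℕ) :
    timeReflect ℓ ⁻¹' (Icc (-(n : ℤ)) (ℓ + n : ℕ)).pi (fun m => {γ m}) =
      (Icc (-(n : ℤ)) (ℓ + n : ℕ)).pi fun m => {timeReflect ℓ γ m} := by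
  ext f
  simp only [mem_preimage, mem_pi, mem_singleton_iff, timeReflect, mem_Icc]
  refine ⟨fun h m hm => ?_, fun h m hm => ?_⟩
  · simpa using h (ℓ - m) (by omega)
  · simpa using h (ℓ - m) (by omega)

end TimeReflection

section LastVisit

variable {d : ℕ} {P : Zd d → Measure (ℕ → Zd d)}

lemma measurableSet_escSet (K : Finset (Zd d)) : MeasurableSet (escSet d K) :=
  measurableSet_setOfPred.mpr (by fun_prop)

def lastVisitSet (K : Finset (Zd d)) (ℓ : ℕ) : Set (ℕ → Zd d) :=
  {ω | ω ℓ ∈ K ∧ ∀ m, ℓ < m → ω m ∉ K}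

lemma measurableSet_lastVisitSet (K : Finset (Zd d)) (ℓ : ℕ) :
    MeasurableSet (lastVisitSet K ℓ) :=
  measurableSet_setOfPred.mpr (by fun_prop)

lemma lastVisitSet_zero_subset_escSet (K : Finset (Zd d)) : lastVisitSet K 0 ⊆ escSet d K :=
  fun _ hω => hω.2

lemma lastVisitSet_eq_inter_preimage_pathShift (K : Finset (Zd d)) (ℓ n : ℕ) :
    lastVisitSet K ℓ = {ω | ω ℓ ∈ K ∧ ∀ k < n, ω (ℓ + k + 1) ∉ K} ∩
      pathShift (ℓ + n) ⁻¹' escSet d K := by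
  ext ω
  simp only [lastVisitSet, escSet, mem_inter_iff, mem_ofPred_eq, mem_preimage, pathShift,
    and_assoc]
  refine and_congr_right fun _ => ⟨fun h => ⟨fun k hk => h _ (by omega),
    fun j hj => h _ (by omega)⟩, fun ⟨h₁, h₂⟩ m hm => ?_⟩
  rcases le_or_gt m (ℓ + n) with hmn | hmn
  · simpa [show ℓ + (m - ℓ - 1) + 1 = m by omega] using h₁ (m - ℓ - 1) (by omega)
  · simpa [Nat.add_sub_cancel' hmn.le] using h₂ (m - (ℓ + n)) (by omega)

theorem IsSRW.measure_pi_Iic_inter_lastVisitSet (hP : IsSRW d P) {x : Zd d} {σ : ℕ → Zd d}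
    (hσ : σ 0 = x) (K : Finset (Zd d)) (ℓ n : ℕ) :
    P x ((Iic (ℓ + n)).pi (fun k => {σ k}) ∩ lastVisitSet K ℓ) =
      if (σ ℓ ∈ K ∧ ∀ k < n, σ (ℓ + k + 1) ∉ K) ∧ ∀ k < ℓ + n, adj (σ (k + 1)) (σ k)
      then (2 * d : ℝ≥0∞)⁻¹ ^ (ℓ + n) * P (σ (ℓ + n)) (escSet d K) else 0 := by
  rw [lastVisitSet_eq_inter_preimage_pathShift K ℓ n, ← inter_assoc]
  set C := (Iic (ℓ + n)).pi fun k => {σ k}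
  set E : Set (ℕ → Zd d) := {ω | ω ℓ ∈ K ∧ ∀ k < n, ω (ℓ + k + 1) ∉ K}
  have hcyl : ∀ ω ∈ C, ω ∈ E ↔ σ ℓ ∈ K ∧ ∀ k < n, σ (ℓ + k + 1) ∉ K := by
    intro ω hω
    have hω' : ∀ k ≤ ℓ + n, ω k = σ k := hω
    simp only [E, mem_ofPred_eq, hω' ℓ (by omega)]
    exact and_congr_right' (forall₂_congr fun k hk => by rw [hω' _ (by omega)])
  by_cases hK : σ ℓ ∈ K ∧ ∀ k < n, σ (ℓ + k + 1) ∉ K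
  · have hCE : C ⊆ E := fun ω hω => (hcyl ω hω).mpr hK
    rw [inter_eq_left.mpr hCE,
      hP.measure_pi_Iic_inter_preimage_pathShift hσ _ (measurableSet_escSet K), ite_mul, zero_mul]
    exact if_congr (and_iff_right hK).symm rfl rfl
  · rw [if_neg fun h => hK h.1]
    exact measure_mono_null (fun ω ⟨⟨hω, hE⟩, _⟩ => hK ((hcyl ω hω).mp hE)) measure_empty

end LastVisit

section Trajectories

variable {d : ℕ}

def pastPath (w : WT d) : ℕ → Zd d := fun n => w.1 (-n)

def futurePath (w : WT d) : ℕ → Zd d := fun n => w.1 n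

lemma measurable_val_apply (n : ℤ) : Measurable fun w : WT d => w.1 n :=
  (measurable_pi_apply n).comp measurable_subtype_coe

lemma measurable_pastPath : Measurable (pastPath (d := d)) :=
  measurable_pi_lambda _ fun _ => measurable_val_apply _

lemma measurable_futurePath : Measurable (futurePath (d := d)) :=
  measurable_pi_lambda _ fun _ => measurable_val_apply _

variable {K : Finset (Zd d)} {w : WT d} {ℓ : ℕ}

lemma finite_visits (K : Finset (Zd d)) (w : WT d) : {n : ℕ | w.1 n ∈ K}.Finite :=
  (w.2.2 K).preimage (f := ((↑) : ℕ → ℤ)) Nat.cast_injective.injOn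

lemma lastTime_le_iff : lastTime d K w ≤ ℓ ↔ ∀ m : ℕ, ℓ < m → w.1 m ∉ K := by
  rw [lastTime, csSup_le_iff' (finite_visits K w).bddAbove]
  exact forall_congr' fun m => by rw [mem_ofPred_eq, ← not_le, not_imp_not]

lemma le_lastTime (h : w.1 ℓ ∈ K) : ℓ ≤ lastTime d K w :=
  le_csSup (finite_visits K w).bddAbove h

lemma futurePath_mem_lastVisitSet_lastTime (h₀ : w.1 0 ∈ K) :
    futurePath w ∈ lastVisitSet K (lastTime d K w) :=
  ⟨Nat.sSup_mem ⟨0, by simpa using h₀⟩ (finite_visits K w).bddAbove, lastTime_le_iff.mp le_rfl⟩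

lemma lastTime_eq_of_futurePath_mem (h : futurePath w ∈ lastVisitSet K ℓ) :
    lastTime d K w = ℓ :=
  le_antisymm (lastTime_le_iff.mpr h.2) (le_lastTime h.1)

lemma futurePath_mem_lastVisitSet_iff :
    futurePath w ∈ lastVisitSet K ℓ ↔ w.1 ℓ ∈ K ∧ ∀ m : ℤ, ℓ < m → w.1 m ∉ K := by
  refine and_congr_right fun _ => ⟨fun h m hm => ?_, fun h m hm => h m (by exact_mod_cast hm)⟩
  obtain ⟨k, rfl⟩ := Int.eq_ofNat_of_zero_le (by omega : 0 ≤ m)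
  exact h k (by exact_mod_cast hm)

lemma pastPath_mem_lastVisitSet_zero_iff :
    pastPath w ∈ lastVisitSet K 0 ↔ w.1 0 ∈ K ∧ ∀ m : ℤ, m < 0 → w.1 m ∉ K := by
  simp only [lastVisitSet, pastPath, mem_ofPred_eq, Nat.cast_zero, neg_zero]
  refine and_congr_right fun _ => ⟨fun h m hm => ?_, fun h k hk => h _ (by omega)⟩
  obtain ⟨k, rfl⟩ := Int.exists_eq_neg_ofNat hm.le
  exact h k (by omega)

lemma pastPath_revAt_mem (h : pastPath w ∈ lastVisitSet K 0) :
    pastPath (revAt d K w) ∈ lastVisitSet K 0 := by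
  obtain ⟨hL, hafter⟩ := futurePath_mem_lastVisitSet_iff.mp
    (futurePath_mem_lastVisitSet_lastTime (pastPath_mem_lastVisitSet_zero_iff.mp h).1)
  rw [pastPath_mem_lastVisitSet_zero_iff]
  exact ⟨by simpa [revAt] using hL, fun m hm => hafter _ (by omega)⟩

lemma measurable_lastTime : Measurable (lastTime d K) :=
  measurable_of_Iic fun ℓ => by
    have : MeasurableSet (K : Set (Zd d)) := .of_discrete
    simp only [preimage, mem_Iic, lastTime_le_iff]
    exact measurableSet_setOfPred.mpr (.forall fun m => measurable_const.imp
      ((measurable_mem.mpr this).comp (measurable_val_apply (m : ℤ))).not)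

lemma measurable_revAt : Measurable (revAt d K) := by
  refine Measurable.subtype_mk (measurable_pi_lambda _ fun n => ?_)
  exact (measurable_from_prod_countable_left (f := fun p : WT d × ℕ => p.1.1 (p.2 - n))
    fun ℓ => measurable_val_apply ((ℓ : ℤ) - n)).comp (measurable_id.prodMk measurable_lastTime)

/-- `W^0_K ∩ {L_K = ℓ}`. -/
def enterExitSet (K : Finset (Zd d)) (ℓ : ℕ) : Set (WT d) :=
  {w | pastPath w ∈ lastVisitSet K 0 ∧ futurePath w ∈ lastVisitSet K ℓ}

lemma measurableSet_enterExitSet (K : Finset (Zd d)) (ℓ : ℕ) :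
    MeasurableSet (enterExitSet K ℓ) :=
  (measurable_pastPath (measurableSet_lastVisitSet K 0)).inter
    (measurable_futurePath (measurableSet_lastVisitSet K ℓ))

lemma iUnion_enterExitSet : ⋃ ℓ, enterExitSet K ℓ = pastPath ⁻¹' lastVisitSet K 0 := by
  ext w
  simp only [mem_iUnion, enterExitSet, mem_ofPred_eq, mem_preimage]
  exact ⟨fun ⟨_, h, _⟩ => h, fun h => ⟨_, h, futurePath_mem_lastVisitSet_lastTime
    (pastPath_mem_lastVisitSet_zero_iff.mp h).1⟩⟩

lemma pairwise_disjoint_enterExitSet :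
    Pairwise fun ℓ ℓ' => Disjoint (enterExitSet (d := d) K ℓ) (enterExitSet K ℓ') :=
  fun _ _ hne => disjoint_left.mpr fun _ h h' =>
    hne ((lastTime_eq_of_futurePath_mem h.2).symm.trans (lastTime_eq_of_futurePath_mem h'.2))

lemma val_revAt_of_mem (h : w ∈ enterExitSet K ℓ) :
    (revAt d K w).1 = timeReflect ℓ w.1 := by
  rw [← lastTime_eq_of_futurePath_mem h.2]
  rfl

end Trajectories

section Window

variable {d : ℕ}

lemma forall_adj_past_future_iff (γ : ℤ → Zd d) (a b : ℕ) :
    ((∀ k < a, adj (γ (-(k + 1 : ℕ))) (γ (-k))) ∧ ∀ k < b, adj (γ (k + 1 : ℕ)) (γ k)) ↔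
      ∀ m ∈ Ico (-(a : ℤ)) b, adj (γ (m + 1)) (γ m) := by
  rw [Int.forall_mem_Ico_neg_iff]
  push_cast
  exact and_congr_left' (forall₂_congr fun k _ => by
    rw [show -((k : ℤ) + 1) + 1 = -k by ring]; exact adj_comm)

lemma preimage_val_pi_Icc_inter_enterExitSet (K : Finset (Zd d)) (γ : ℤ → Zd d) (ℓ n : ℕ) :
    Subtype.val ⁻¹' (Icc (-(n : ℤ)) (ℓ + n : ℕ)).pi (fun m => {γ m}) ∩ enterExitSet K ℓ =
      {w : WT d | pastPath w ∈ (Iic n).pi (fun k => {γ (-k)}) ∩ lastVisitSet K 0 ∧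
        w.1 0 = γ 0 ∧ futurePath w ∈ (Iic (ℓ + n)).pi (fun k => {γ k}) ∩ lastVisitSet K ℓ} := by
  ext w
  have hwindow : w.1 ∈ (Icc (-(n : ℤ)) (ℓ + n : ℕ)).pi (fun m => {γ m}) ↔
      pastPath w ∈ (Iic n).pi (fun k => {γ (-k)}) ∧
        futurePath w ∈ (Iic (ℓ + n)).pi (fun k => {γ k}) :=
    Int.forall_mem_Icc_neg_iff _ _
  simp only [mem_inter_iff, mem_preimage, hwindow, enterExitSet, mem_ofPred_eq]
  constructor
  · rintro ⟨⟨hp, hf⟩, hp', hf'⟩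
    exact ⟨⟨hp, hp'⟩, hf 0 (Nat.zero_le _), hf, hf'⟩
  · rintro ⟨⟨hp, hp'⟩, -, hf, hf'⟩
    exact ⟨⟨hp, hf⟩, hp', hf'⟩

variable (P : Zd d → Measure (ℕ → Zd d)) (K : Finset (Zd d)) (ℓ n : ℕ)

open Classical in
noncomputable def windowWeight (γ : ℤ → Zd d) : ℝ≥0∞ :=
  if (γ 0 ∈ K ∧ γ ℓ ∈ K ∧ (∀ k < n, γ (-(k + 1 : ℕ)) ∉ K) ∧ ∀ k < n, γ (ℓ + k + 1 : ℕ) ∉ K) ∧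
      ∀ m ∈ Ico (-(n : ℤ)) (ℓ + n : ℕ), adj (γ (m + 1)) (γ m)
  then (2 * d : ℝ≥0∞)⁻¹ ^ (n + (ℓ + n)) *
    (P (γ (-n)) (escSet d K) * P (γ (ℓ + n : ℕ)) (escSet d K))
  else 0

lemma windowWeight_timeReflect (γ : ℤ → Zd d) :
    windowWeight P K ℓ n (timeReflect ℓ γ) = windowWeight P K ℓ n γ := by
  have hadj : (∀ m ∈ Ico (-(n : ℤ)) (ℓ + n), adj (γ (ℓ - (m + 1))) (γ (ℓ - m))) ↔
      ∀ m ∈ Ico (-(n : ℤ)) (ℓ + n), adj (γ (m + 1)) (γ m) := by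
    refine ⟨fun h m hm => ?_, fun h m hm => ?_⟩ <;>
    · have := h (ℓ - 1 - m) ⟨by linarith [hm.2], by linarith [hm.1]⟩
      ring_nf at this ⊢
      exact adj_symm this
  classical
  unfold windowWeight timeReflect
  push_cast
  have hfuture (k : ℤ) : γ (ℓ - (ℓ + k + 1)) = γ (-(k + 1)) := congrArg γ (by ring)
  simp only [sub_zero, sub_self, sub_neg_eq_add, sub_add_cancel_left, hfuture, hadj]
  exact if_congr (by tauto) (by ring) rfl

end Window

namespace IsQK

variable {d : ℕ} {P : Zd d → Measure (ℕ → Zd d)} {K : Finset (Zd d)} {QK : Measure (WT d)}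

lemma measure_eq (hQK : IsQK d P K QK) (x : Zd d) {A B : Set (ℕ → Zd d)}
    (hA : MeasurableSet A) (hB : MeasurableSet B) :
    QK {w | pastPath w ∈ A ∧ w.1 0 = x ∧ futurePath w ∈ B} =
      if x ∈ K then P x (A ∩ escSet d K) * P x B else 0 :=
  hQK x A B hA hB

lemma isFiniteMeasure (hP : IsSRW d P) (hQK : IsQK d P K QK) : IsFiniteMeasure QK := by
  have hcover : (univ : Set (WT d)) =
      ⋃ x, {w | pastPath w ∈ univ ∧ w.1 0 = x ∧ futurePath w ∈ univ} := by
    ext w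
    simp
  constructor
  rw [hcover]
  refine (measure_iUnion_le _).trans_lt ?_
  rw [tsum_eq_sum (s := K) fun x hx => by rw [hQK.measure_eq x .univ .univ, if_neg hx]]
  refine ENNReal.sum_lt_top.mpr fun x hx => ?_
  have := hP.1 x
  rw [hQK.measure_eq x .univ .univ, if_pos hx]
  exact ENNReal.mul_lt_top (measure_lt_top _ _) (measure_lt_top _ _)

lemma ae_pastPath_mem (hP : IsSRW d P) (hQK : IsQK d P K QK) :
    ∀ᵐ w ∂QK, pastPath w ∈ lastVisitSet K 0 := by
  have hcover : {w : WT d | pastPath w ∉ lastVisitSet K 0} =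
      ⋃ x, {w | pastPath w ∈ (lastVisitSet K 0)ᶜ ∧ w.1 0 = x ∧ futurePath w ∈ univ} := by
    ext w
    simp
  rw [ae_iff, hcover, measure_iUnion_null_iff]
  intro x
  rw [hQK.measure_eq x (measurableSet_lastVisitSet K 0).compl .univ]
  split_ifs with hx
  · refine mul_eq_zero_of_left (measure_mono_null (fun ω ⟨hω, hesc⟩ h₀ => hω ⟨h₀ ▸ hx, hesc⟩)
      (ae_iff.mp (hP.ae_eval_zero x))) _
  · rfl

lemma eq_sum_restrict_enterExitSet (hP : IsSRW d P) (hQK : IsQK d P K QK) :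
    QK = Measure.sum fun ℓ => QK.restrict (enterExitSet K ℓ) := by
  rw [← Measure.restrict_iUnion pairwise_disjoint_enterExitSet (measurableSet_enterExitSet K),
    iUnion_enterExitSet]
  exact (Measure.restrict_eq_self_of_ae_mem (hQK.ae_pastPath_mem hP)).symm

theorem measure_preimage_val_pi_Icc_inter_enterExitSet (hP : IsSRW d P) (hQK : IsQK d P K QK)
    (γ : ℤ → Zd d) (ℓ n : ℕ) :
    QK (Subtype.val ⁻¹' (Icc (-(n : ℤ)) (ℓ + n : ℕ)).pi (fun m => {γ m}) ∩ enterExitSet K ℓ) =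
      windowWeight P K ℓ n γ := by
  have hpast := hP.measure_pi_Iic_inter_lastVisitSet (x := γ 0) (σ := fun k : ℕ => γ (-k))
    (by simp) K 0 n
  have hfuture := hP.measure_pi_Iic_inter_lastVisitSet (x := γ 0) (σ := fun k : ℕ => γ k)
    (by simp) K ℓ n
  simp only [zero_add, Nat.cast_zero, neg_zero] at hpast
  rw [preimage_val_pi_Icc_inter_enterExitSet,
    hQK.measure_eq _ ((measurableSet_pi_singleton _ _).inter (measurableSet_lastVisitSet K 0))
      ((measurableSet_pi_singleton _ _).inter (measurableSet_lastVisitSet K ℓ)),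
    inter_eq_left.mpr (inter_subset_right.trans (lastVisitSet_zero_subset_escSet K)),
    hpast, hfuture, ite_zero_mul_ite_zero, ← ite_and, windowWeight]
  classical
  exact if_congr (by rw [← forall_adj_past_future_iff]; tauto) (by ring) rfl

theorem map_timeReflect_map_val_restrict (hP : IsSRW d P) (hQK : IsQK d P K QK) (ℓ : ℕ) :
    ((QK.restrict (enterExitSet K ℓ)).map Subtype.val).map (timeReflect ℓ) =
      (QK.restrict (enterExitSet K ℓ)).map Subtype.val := by
  have := hQK.isFiniteMeasure hP
  have hmeas (n : ℕ) (γ : ℤ → Zd d) :=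
    measurableSet_pi_singleton (Icc (-(n : ℤ)) (ℓ + n : ℕ)) γ
  refine Measure.ext_of_pointCylinders (s := fun n : ℕ => Icc (-(n : ℤ)) (ℓ + n : ℕ))
    (fun _ _ h => Icc_subset_Icc (by omega) (by omega)) (fun _ => finite_Icc _ _)
    (fun i => ⟨i.natAbs, by omega, by omega⟩) (fun n γ => ?_) ?_
  · rw [Measure.map_apply (measurable_timeReflect ℓ) (hmeas n γ), preimage_timeReflect_pi_Icc,
      Measure.map_apply measurable_subtype_coe (hmeas n _),
      Measure.map_apply measurable_subtype_coe (hmeas n γ),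
      Measure.restrict_apply (measurable_subtype_coe (hmeas n _)),
      Measure.restrict_apply (measurable_subtype_coe (hmeas n γ)),
      hQK.measure_preimage_val_pi_Icc_inter_enterExitSet hP,
      hQK.measure_preimage_val_pi_Icc_inter_enterExitSet hP, windowWeight_timeReflect]
  · rw [Measure.map_apply (measurable_timeReflect ℓ) .univ, preimage_univ]

theorem map_revAt (hP : IsSRW d P) (hQK : IsQK d P K QK) : QK.map (revAt d K) = QK := by
  have hsum := hQK.eq_sum_restrict_enterExitSet hP
  have hslice (ℓ : ℕ) : (QK.restrict (enterExitSet K ℓ)).map (Subtype.val ∘ revAt d K) =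
      ((QK.restrict (enterExitSet K ℓ)).map Subtype.val).map (timeReflect ℓ) := by
    rw [Measure.map_map (measurable_timeReflect ℓ) measurable_subtype_coe]
    exact Measure.map_congr ((ae_restrict_mem (measurableSet_enterExitSet K ℓ)).mono
      fun w hw => val_revAt_of_mem hw)
  refine Measure.map_subtype_val_injective ?_
  calc (QK.map (revAt d K)).map Subtype.val
      = QK.map (Subtype.val ∘ revAt d K) :=
        Measure.map_map measurable_subtype_coe measurable_revAt
    _ = Measure.sum fun ℓ =>
          (QK.restrict (enterExitSet K ℓ)).map (Subtype.val ∘ revAt d K) := by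
      conv_lhs => rw [hsum]
      exact Measure.map_sum (measurable_subtype_coe.comp measurable_revAt).aemeasurable
    _ = Measure.sum fun ℓ => (QK.restrict (enterExitSet K ℓ)).map Subtype.val := by
      simp_rw [hslice, hQK.map_timeReflect_map_val_restrict hP]
    _ = QK.map Subtype.val := by
      conv_rhs => rw [hsum]
      exact (Measure.map_sum measurable_subtype_coe.aemeasurable).symm

end IsQK

theorem QK_time_reversal_general
    (d : ℕ) (P : Zd d → Measure (ℕ → Zd d)) (hP : IsSRW d P)
    (K : Finset (Zd d)) (QK : Measure (WT d)) (hQK : IsQK d P K QK) :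
    (∀ w : WT d, w.1 0 ∈ K → (∀ n : ℤ, n < 0 → w.1 n ∉ K) →
      ((revAt d K w).1 0 ∈ K ∧ ∀ n : ℤ, n < 0 → (revAt d K w).1 n ∉ K))
    ∧ QK.map (revAt d K) = QK :=
  ⟨fun _ h₀ hneg => pastPath_mem_lastVisitSet_zero_iff.mp
      (pastPath_revAt_mem (pastPath_mem_lastVisitSet_zero_iff.mpr ⟨h₀, hneg⟩)),
    hQK.map_revAt hP⟩

/-- **Time-reversal invariance of `Q_K`.** The map `w ↦ ŵ`, `ŵ(n) = w(L_K(w) − n)`,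
maps `W^0_K` into itself and the image of `Q_K` under it equals `Q_K`. -/
theorem QK_time_reversal
    (d : ℕ) (hd : 3 ≤ d) (P : Zd d → Measure (ℕ → Zd d)) (hP : IsSRW d P)
    (K : Finset (Zd d)) (QK : Measure (WT d)) (hQK : IsQK d P K QK) :
    (∀ w : WT d, w.1 0 ∈ K → (∀ n : ℤ, n < 0 → w.1 n ∉ K) →
      ((revAt d K w).1 0 ∈ K ∧ ∀ n : ℤ, n < 0 → (revAt d K w).1 n ∉ K))
    ∧ QK.map (revAt d K) = QK :=
  QK_time_reversal_general d P hP K QK hQK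
end

section
/- (Exponential moment of occupation time of a low-dimensional set.) Let d ≥ 4 and 1 ≤ m ≤ d−3, and let λ > 0 satisfy χ(λ) := e^λ·(m/d + (1 − m/d)·q(d−m)) < 1. Let F ∈ ℒ_m be an m-dimensional coordinate affine sublattice of ℤ^d and A ⊆ F finite, and set f_A = Σ_{n≥0} 1{X_n ∈ A}. Then sup_{x∈ℤ^d} E_x[exp(λ f_A)] ≤ 1 + (e^λ − 1)/(1 − χ(λ)), and consequently E_{e_A}[exp(λ f_A) − 1] ≤ cap(A)·(e^λ − 1)/(1 − χ(λ)). -/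
open MeasureTheory
open scoped ENNReal

/-- The equilibrium measure `e_K`. -/
noncomputable def eqm (d : ℕ) (P : Zd d → Measure (ℕ → Zd d)) (K : Finset (Zd d))
    (x : Zd d) : ℝ≥0∞ :=
  if x ∈ K then P x (escSet d K) else 0

/-- The capacity `cap(K) = Σ_x e_K(x)`. -/
noncomputable def capa (d : ℕ) (P : Zd d → Measure (ℕ → Zd d)) (K : Finset (Zd d)) : ℝ≥0∞ :=
  ∑ x ∈ K, eqm d P K x

/-- `Q` is a vacant-set law at level `u`:
`Q[Y_z = 1 for z ∈ K] = exp(−u·cap(K))` for every finite `K`. -/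
def IsVacantLaw (d : ℕ) (P : Zd d → Measure (ℕ → Zd d)) (u : ℝ)
    (Q : Measure (Zd d → Bool)) : Prop :=
  IsProbabilityMeasure Q ∧
  ∀ K : Finset (Zd d),
    Q {ω | ∀ z ∈ K, ω z = true} = ENNReal.ofReal (Real.exp (-(u * (capa d P K).toReal)))

/- `exp(λ f_A)(w)` where `f_A(w) = Σ_{n≥0} 1{X_n(w) ∈ A}` is the total occupation time
of `A` (value `∞` when `A` is visited infinitely often). -/
open Classical in
noncomputable def expOcc (d : ℕ) (lam : ℝ) (A : Finset (Zd d)) (w : ℕ → Zd d) : ℝ≥0∞ :=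
  if h : {n : ℕ | w n ∈ A}.Finite then ENNReal.ofReal (Real.exp (lam * h.toFinset.card))
  else ⊤

/-- The return probability `q(ν)` of simple random walk on `ℤ^ν`. -/
noncomputable def retProb (ν : ℕ) (Pν : Zd ν → Measure (ℕ → Zd ν)) : ℝ :=
  (Pν 0 {w : ℕ → Zd ν | ∃ n : ℕ, 1 ≤ n ∧ w n = 0}).toReal

/-- `χ(λ) = e^λ (m/d + (1 − m/d) q(d−m))`. -/
noncomputable def chiVal (d m : ℕ) (q lam : ℝ) : ℝ :=
  Real.exp lam * ((m : ℝ) / d + (1 - (m : ℝ) / d) * q)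

/-!
Both estimates are first-step (Markov property at time `1`) arguments.

Hitting probabilities are dominated by every superharmonic function that is `≥ 1` on the
target. Projecting onto the `d - m` coordinates transversal to `F` turns the walk into a lazy
simple random walk on `ℤ^(d-m)` that stays put with probability `m / d`; composing its
probability of hitting `0` with the projection gives such a function for `F`. Hence the return
probability to `F` from a point of `F` is at most `χ₀ = m/d + (1 - m/d) q(d-m)`.

With `K = (e^λ - 1) / (1 - e^λ χ₀)`, i.e. `e^λ (1 + K χ₀) = 1 + K`, induction on the time
horizon `N` gives `E_x[e^(λ · #visits to A before N)] ≤ 1 + K P_x[H_A < ∞]`: a visit to `A`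
contributes a factor `e^λ` and is followed by a return to `A` with probability at most `χ₀`.
Monotone convergence in `N` gives the first bound; integrating it against `e_A` the second.
-/

namespace ZdWalk

variable {ν : ℕ}

def cyl (N : ℕ) (γ : ℕ → Zd ν) : Set (ℕ → Zd ν) := {w | ∀ k ≤ N, w k = γ k}

def tail (w : ℕ → Zd ν) : ℕ → Zd ν := fun k => w (k + 1)

def cons (x : Zd ν) (γ : ℕ → Zd ν) : ℕ → Zd ν
  | 0 => x
  | k + 1 => γ k

def nbr (x : Zd ν) (p : Fin ν × ℤˣ) : Zd ν := x + Pi.single p.1 (p.2 : ℤ)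

noncomputable def nbrMean (f : Zd ν → ℝ≥0∞) (x : Zd ν) : ℝ≥0∞ :=
  (2 * ν : ℝ≥0∞)⁻¹ * ∑ p, f (nbr x p)

def hitWithin (S : Set (Zd ν)) (n : ℕ) : Set (ℕ → Zd ν) := {w | ∃ k < n, w k ∈ S}

def hit (S : Set (Zd ν)) : Set (ℕ → Zd ν) := {w | ∃ k, w k ∈ S}

def ret (S : Set (Zd ν)) : Set (ℕ → Zd ν) := {w | ∃ k, 1 ≤ k ∧ w k ∈ S}

def visits (A : Finset (Zd ν)) (N : ℕ) (w : ℕ → Zd ν) : ℕ :=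
  ((Finset.range N).filter fun k => w k ∈ A).card

lemma measurable_tail : Measurable (tail (ν := ν)) :=
  measurable_pi_lambda _ fun k => measurable_pi_apply (k + 1)

lemma measurableSet_cyl (N : ℕ) (γ : ℕ → Zd ν) : MeasurableSet (cyl N γ) := by
  have : cyl N γ = ⋂ k ∈ Finset.range (N + 1), (fun w : ℕ → Zd ν => w k) ⁻¹' {γ k} := by
    ext w; simp [cyl]
  rw [this]
  exact .biInter (Finset.range (N + 1)).countable_toSet
    fun k _ => measurable_pi_apply k (.singleton _)

lemma measurableSet_hitWithin (S : Set (Zd ν)) (n : ℕ) : MeasurableSet (hitWithin S n) := by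
  have : hitWithin S n = ⋃ k ∈ Finset.range n, (fun w : ℕ → Zd ν => w k) ⁻¹' S := by
    ext w; simp [hitWithin]
  rw [this]
  exact .biUnion (Finset.range n).countable_toSet
    fun k _ => measurable_pi_apply k MeasurableSet.of_discrete

lemma measurableSet_hit (S : Set (Zd ν)) : MeasurableSet (hit S) := by
  have : hit S = ⋃ k, (fun w : ℕ → Zd ν => w k) ⁻¹' S := by ext w; simp [hit]
  rw [this]
  exact .iUnion fun k => measurable_pi_apply k MeasurableSet.of_discrete

lemma mem_cyl_succ_cons {N : ℕ} {x : Zd ν} {δ w : ℕ → Zd ν} :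
    w ∈ cyl (N + 1) (cons x δ) ↔ w 0 = x ∧ tail w ∈ cyl N δ := by
  constructor
  · intro h
    exact ⟨h 0 (by omega), fun k hk => h (k + 1) (by omega)⟩
  · rintro ⟨h0, h⟩ (_ | k) hk
    exacts [h0, h k (by omega)]

lemma isPiSystem_cyl : IsPiSystem {S : Set (ℕ → Zd ν) | ∃ N γ, S = cyl N γ} := by
  have hinter : ∀ N M (γ δ : ℕ → Zd ν), N ≤ M → (cyl N γ ∩ cyl M δ).Nonempty →
      cyl N γ ∩ cyl M δ = cyl M δ := by
    rintro N M γ δ hNM ⟨w, hγ, hδ⟩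
    refine Set.inter_eq_self_of_subset_right fun v hv k hk => ?_
    rw [hv k (hk.trans hNM), ← hδ k (hk.trans hNM), hγ k hk]
  rintro _ ⟨N, γ, rfl⟩ _ ⟨M, δ, rfl⟩ hne
  rcases le_total N M with h | h
  · exact ⟨M, δ, hinter N M γ δ h hne⟩
  · exact ⟨N, γ, Set.inter_comm _ _ ▸ hinter M N δ γ h (Set.inter_comm _ _ ▸ hne)⟩

lemma generateFrom_cyl : (MeasurableSpace.pi : MeasurableSpace (ℕ → Zd ν)) =
    MeasurableSpace.generateFrom {S | ∃ N γ, S = cyl N γ} := by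
  refine le_antisymm ?_ (MeasurableSpace.generateFrom_le ?_)
  · refine iSup_le fun n => MeasurableSpace.comap_le_iff_le_map.2 fun s _ => ?_
    have hpt : ∀ a : Zd ν, {w : ℕ → Zd ν | w n = a} =
        ⋃ t : Fin n → Zd ν, cyl n fun k => if h : k < n then t ⟨k, h⟩ else a := by
      intro a
      ext w
      simp only [Set.mem_ofPred_eq, Set.mem_iUnion, cyl]
      constructor
      · intro hw
        refine ⟨fun k => w k, fun k hk => ?_⟩
        rcases hk.lt_or_eq with hk | rfl
        · simp [hk]
        · simp [hw]
      · rintro ⟨t, ht⟩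
        simpa using ht n le_rfl
    have : (fun w : ℕ → Zd ν => w n) ⁻¹' s = ⋃ a ∈ s, {w | w n = a} := by ext; simp
    rw [MeasurableSpace.map_def, this]
    exact .biUnion s.to_countable fun a _ => hpt a ▸
      .iUnion fun t => MeasurableSpace.measurableSet_generateFrom ⟨_, _, rfl⟩
  · rintro _ ⟨N, γ, rfl⟩
    exact measurableSet_cyl N γ

lemma adj_nbr (x : Zd ν) (p : Fin ν × ℤˣ) : adj (nbr x p) x := by
  simp only [adj, nbr]
  rw [Finset.sum_eq_single p.1 (fun j _ hj => by simp [hj]) (by simp)]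
  simp

lemma nbr_injective (x : Zd ν) : Function.Injective (nbr x) := by
  rintro ⟨i, u⟩ ⟨j, v⟩ h
  have h' := congrFun (add_left_cancel h) i
  by_cases hij : i = j
  · subst hij
    simp only [Pi.single_eq_same, Units.val_inj] at h'
    rw [h']
  · simp [hij] at h'

lemma exists_nbr_eq_of_adj {z x : Zd ν} (h : adj z x) : ∃ p, nbr x p = z := by
  set f : Fin ν → ℕ := fun j => (z j - x j).natAbs
  obtain ⟨i, hi⟩ : ∃ i, f i ≠ 0 := by
    by_contra! h0
    simp [adj, f, h0] at h
  have hsplit := Finset.add_sum_erase Finset.univ f (Finset.mem_univ i)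
  change ∑ j, f j = 1 at h
  have hfi : f i = 1 := by omega
  have hrest : ∀ j ≠ i, z j = x j := fun j hj => by
    have : f j = 0 :=
      (Finset.sum_eq_zero_iff (s := Finset.univ.erase i)).1 (by omega) j (by simp [hj])
    simpa [f, sub_eq_zero] using this
  refine ⟨(i, (Int.isUnit_iff_natAbs_eq.2 hfi).unit), funext fun j => ?_⟩
  by_cases hj : j = i
  · subst hj; simp [nbr]
  · simp [nbr, hj, hrest j hj]

lemma sum_ite_nbr_eq {M : Type*} [AddCommMonoid M] (x z : Zd ν) (c : M) :
    ∑ p, (if nbr x p = z then c else 0) = if adj z x then c else 0 := by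
  classical
  rw [← Finset.sum_image (f := fun y => if y = z then c else 0)
    fun p _ q _ h => nbr_injective x h, Finset.sum_ite_eq']
  congr 1
  simp only [Finset.mem_image, Finset.mem_univ, true_and, eq_iff_iff]
  exact ⟨fun ⟨p, hp⟩ => hp ▸ adj_nbr x p, exists_nbr_eq_of_adj⟩

lemma nbrMean_mono {f g : Zd ν → ℝ≥0∞} (h : ∀ y, f y ≤ g y) (x : Zd ν) :
    nbrMean f x ≤ nbrMean g x := by
  unfold nbrMean
  gcongr with p
  exact h _

lemma nbrMean_const_add_mul (hν : 0 < ν) (a b : ℝ≥0∞) (f : Zd ν → ℝ≥0∞) (x : Zd ν) :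
    nbrMean (fun y => a + b * f y) x = a + b * nbrMean f x := by
  have h2ν : (2 * ν : ℝ≥0∞) ≠ 0 := by simp [hν.ne']
  simp only [nbrMean, Finset.sum_add_distrib, ← Finset.mul_sum, Finset.sum_const,
    Finset.card_univ, Fintype.card_prod, Fintype.card_fin, Fintype.card_units_int, nsmul_eq_mul]
  rw [mul_add, ← mul_assoc, mul_left_comm _ b]
  push_cast
  rw [mul_comm (ν : ℝ≥0∞) 2, ENNReal.inv_mul_cancel h2ν (by simp [ENNReal.mul_eq_top]), one_mul]

end ZdWalk

namespace IsSRW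

open ZdWalk

variable {ν : ℕ} {P : Zd ν → Measure (ℕ → Zd ν)}

lemma measure_cyl (hP : IsSRW ν P) {x : Zd ν} {N : ℕ} {γ : ℕ → Zd ν} (h : γ 0 = x) :
    P x (cyl N γ) = if ∀ k < N, adj (γ (k + 1)) (γ k) then (2 * ν : ℝ≥0∞)⁻¹ ^ N else 0 :=
  hP.2 x N γ h

lemma dim_pos (hP : IsSRW ν P) : 0 < ν := by
  by_contra h
  obtain rfl : ν = 0 := by omega
  have h1 : P 0 (cyl 1 fun _ => 0) = 0 := by
    rw [hP.measure_cyl (x := 0) rfl, if_neg (by simp [adj])]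
  have huniv : cyl 1 (fun _ => (0 : Zd 0)) = Set.univ :=
    Set.eq_univ_of_forall fun w k _ => Subsingleton.elim _ _
  have := hP.1 0
  rw [huniv, measure_univ] at h1
  exact one_ne_zero h1

lemma ae_start (hP : IsSRW ν P) (x : Zd ν) : ∀ᵐ w ∂P x, w 0 = x := by
  have := hP.1 x
  have h : ∀ᵐ w ∂P x, w ∈ cyl 0 fun _ => x :=
    (ae_mem_iff_measure_eq (measurableSet_cyl 0 _).nullMeasurableSet).2 (by simp [hP.measure_cyl])
  filter_upwards [h] with w hw using hw 0 le_rfl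

lemma measure_congr_start (hP : IsSRW ν P) {x : Zd ν} {E F : Set (ℕ → Zd ν)}
    (h : ∀ w, w 0 = x → (w ∈ E ↔ w ∈ F)) : P x E = P x F :=
  measure_congr ((hP.ae_start x).mono fun w hw => propext (h w hw))

lemma measure_cyl_of_ne (hP : IsSRW ν P) {x : Zd ν} {N : ℕ} {γ : ℕ → Zd ν} (h : γ 0 ≠ x) :
    P x (cyl N γ) = 0 :=
  measure_mono_null (fun _ hw h0 => h ((hw 0 (Nat.zero_le N)).symm.trans h0))
    (ae_iff.1 (hP.ae_start x))

lemma map_tail (hP : IsSRW ν P) (x : Zd ν) :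
    (P x).map tail = ∑ p, (2 * ν : ℝ≥0∞)⁻¹ • P (nbr x p) := by
  have := hP.1 x
  refine ext_of_generate_finite _ generateFrom_cyl isPiSystem_cyl ?_ ?_
  · rintro _ ⟨N, δ, rfl⟩
    have hnbr : ∑ p, P (nbr x p) (cyl N δ) = if adj (δ 0) x then P (δ 0) (cyl N δ) else 0 := by
      rw [← sum_ite_nbr_eq]
      refine Finset.sum_congr rfl fun p _ => ?_
      split_ifs with h
      · rw [h]
      · exact hP.measure_cyl_of_ne (Ne.symm h)
    rw [Measure.map_apply measurable_tail (measurableSet_cyl N δ),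
      hP.measure_congr_start (F := cyl (N + 1) (cons x δ)) fun w hw => by
        simp [mem_cyl_succ_cons, hw]]
    simp only [Measure.coe_finsetSum, Finset.sum_apply, Measure.smul_apply, smul_eq_mul,
      ← Finset.mul_sum, hnbr]
    rw [hP.measure_cyl (x := x) (γ := cons x δ) rfl, hP.measure_cyl rfl]
    simp only [Nat.forall_lt_succ_left, cons]
    by_cases hadj : adj (δ 0) x <;> by_cases hδ : ∀ k < N, adj (δ (k + 1)) (δ k) <;>
      simp [hadj, hδ, pow_succ']
  · have h2ν : (2 * ν : ℝ≥0∞) ≠ 0 := by simp [hP.dim_pos.ne']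
    simp only [Measure.coe_finsetSum, Finset.sum_apply, Measure.smul_apply, smul_eq_mul,
      Measure.map_apply measurable_tail MeasurableSet.univ, Set.preimage_univ]
    simp only [fun y => (hP.1 y).measure_univ, mul_one, Finset.sum_const, Finset.card_univ,
      Fintype.card_prod, Fintype.card_fin, Fintype.card_units_int, nsmul_eq_mul]
    push_cast
    rw [mul_comm (ν : ℝ≥0∞) 2, ENNReal.mul_inv_cancel h2ν (by simp [ENNReal.mul_eq_top])]

lemma measure_preimage_tail (hP : IsSRW ν P) {E : Set (ℕ → Zd ν)} (hE : MeasurableSet E)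
    (x : Zd ν) : P x (tail ⁻¹' E) = nbrMean (fun y => P y E) x := by
  rw [← Measure.map_apply measurable_tail hE, hP.map_tail, nbrMean, Finset.mul_sum]
  simp [Measure.coe_finsetSum]

lemma lintegral_comp_tail (hP : IsSRW ν P) {f : (ℕ → Zd ν) → ℝ≥0∞} (hf : Measurable f)
    (x : Zd ν) : ∫⁻ w, f (tail w) ∂P x = nbrMean (fun y => ∫⁻ w, f w ∂P y) x := by
  rw [← lintegral_map hf measurable_tail, hP.map_tail, lintegral_finsetSum_measure, nbrMean,
    Finset.mul_sum]
  simp [lintegral_smul_measure]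

lemma measure_hit_of_mem (hP : IsSRW ν P) {S : Set (Zd ν)} {x : Zd ν} (hx : x ∈ S) :
    P x (hit S) = 1 := by
  have := hP.1 x
  rw [hP.measure_congr_start (F := Set.univ) fun w hw => by simpa using ⟨0, hw ▸ hx⟩,
    measure_univ]

lemma measure_hit_of_notMem (hP : IsSRW ν P) {S : Set (Zd ν)} {x : Zd ν} (hx : x ∉ S) :
    P x (hit S) = P x (ret S) := by
  refine hP.measure_congr_start fun w hw => ⟨fun ⟨k, hk⟩ => ⟨k, ?_, hk⟩, fun ⟨k, _, hk⟩ => ⟨k, hk⟩⟩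
  rcases k with _ | k
  · exact absurd (hw ▸ hk) hx
  · omega

lemma measure_ret (hP : IsSRW ν P) (S : Set (Zd ν)) (x : Zd ν) :
    P x (ret S) = nbrMean (fun y => P y (hit S)) x := by
  rw [← hP.measure_preimage_tail (measurableSet_hit S)]
  congr 1
  ext w
  constructor
  · rintro ⟨k, hk, hw⟩
    exact ⟨k - 1, by rwa [tail, Nat.sub_add_cancel hk]⟩
  · rintro ⟨k, hw⟩
    exact ⟨k + 1, by omega, hw⟩

lemma measure_hitWithin_succ (hP : IsSRW ν P) {S : Set (Zd ν)} {x : Zd ν} (hx : x ∉ S)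
    (n : ℕ) : P x (hitWithin S (n + 1)) = nbrMean (fun y => P y (hitWithin S n)) x := by
  rw [← hP.measure_preimage_tail (measurableSet_hitWithin S n)]
  refine hP.measure_congr_start fun w hw => ?_
  simp only [hitWithin, tail, Set.mem_preimage, Set.mem_ofPred_eq, Nat.exists_lt_succ_left, hw,
    hx, false_or]

lemma measure_hit_le_of_superharmonic (hP : IsSRW ν P) {S : Set (Zd ν)} {v : Zd ν → ℝ≥0∞}
    (hS : ∀ z ∈ S, 1 ≤ v z) (hv : ∀ z ∉ S, nbrMean v z ≤ v z) (x : Zd ν) :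
    P x (hit S) ≤ v x := by
  have hiUnion : hit S = ⋃ n, hitWithin S n := by
    ext w
    simp only [hit, hitWithin, Set.mem_iUnion, Set.mem_ofPred_eq]
    exact ⟨fun ⟨k, hk⟩ => ⟨k + 1, k, k.lt_add_one, hk⟩, fun ⟨_, k, _, hk⟩ => ⟨k, hk⟩⟩
  have hmono : Monotone (hitWithin S) :=
    fun m n hmn w ⟨k, hk, hw⟩ => ⟨k, hk.trans_le hmn, hw⟩
  rw [hiUnion, hmono.measure_iUnion]
  refine iSup_le fun n => ?_
  induction n generalizing x with
  | zero => simp [hitWithin]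
  | succ n ih =>
    by_cases hx : x ∈ S
    · have := hP.1 x
      exact prob_le_one.trans (hS x hx)
    · rw [hP.measure_hitWithin_succ hx]
      exact (nbrMean_mono ih x).trans (hv x hx)

end IsSRW

namespace ZdWalk

section CoordSublattice

variable {d k : ℕ} {I : Finset (Fin d)}

def coordSublattice (I : Finset (Fin d)) (y : Zd d) : Set (Zd d) := {z | ∀ i ∉ I, z i = y i}

def coordProj (e : {i // i ∉ I} ≃ Fin k) (y z : Zd d) : Zd k :=
  fun j => z (e.symm j) - y (e.symm j)

lemma card_add_eq_of_equiv (e : {i // i ∉ I} ≃ Fin k) : I.card + k = d := by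
  have h := Fintype.card_congr e
  rw [Fintype.card_subtype_compl, Fintype.card_coe, Fintype.card_fin, Fintype.card_fin] at h
  have := (Finset.card_le_univ I).trans_eq (Fintype.card_fin d)
  omega

variable (e : {i // i ∉ I} ≃ Fin k) (y : Zd d)

lemma coordProj_eq_zero_iff {z : Zd d} : coordProj e y z = 0 ↔ z ∈ coordSublattice I y := by
  constructor
  · intro h i hi
    simpa [coordProj, sub_eq_zero] using congrFun h (e ⟨i, hi⟩)
  · intro h
    funext j
    simp [coordProj, h _ (e.symm j).2]

lemma coordProj_nbr_of_mem (z : Zd d) {p : Fin d × ℤˣ} (hp : p.1 ∈ I) :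
    coordProj e y (nbr z p) = coordProj e y z := by
  funext j
  have : (e.symm j : Fin d) ≠ p.1 := fun h => (e.symm j).2 (h ▸ hp)
  simp [coordProj, nbr, this]

lemma coordProj_nbr_symm (z : Zd d) (i : Fin k) (v : ℤˣ) :
    coordProj e y (nbr z ((e.symm i : Fin d), v)) = nbr (coordProj e y z) (i, v) := by
  funext j
  by_cases hj : j = i
  · subst hj
    simp only [coordProj, nbr, Pi.add_apply, Pi.single_eq_same]
    ring
  · have : (e.symm j : Fin d) ≠ e.symm i := fun h => hj (e.symm.injective (Subtype.val_injective h))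
    simp [coordProj, nbr, this, hj]

/-- The image under `coordProj` of a step of the walk on `ℤ^d` is a lazy step of the walk on
`ℤ^k`: it stays put with probability `|I| / d`. -/
lemma sum_nbr_coordProj (u : Zd k → ℝ≥0∞) (z : Zd d) :
    ∑ p, u (coordProj e y (nbr z p)) =
      2 * I.card * u (coordProj e y z) + ∑ q, u (nbr (coordProj e y z) q) := by
  rw [Fintype.sum_prod_type, ← Fintype.sum_subtype_add_sum_subtype (· ∈ I)]
  congr 1
  · simp only [fun (i : {i // i ∈ I}) (v : ℤˣ) => coordProj_nbr_of_mem e y z (p := (i.1, v)) i.2,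
      Finset.sum_const, Finset.card_univ, Fintype.card_units_int, Fintype.card_coe, nsmul_eq_mul]
    push_cast
    ring
  · rw [← e.symm.sum_comp, Fintype.sum_prod_type]
    simp only [coordProj_nbr_symm]

lemma nbrMean_comp_coordProj (hk : 0 < k) (u : Zd k → ℝ≥0∞) (z : Zd d) :
    nbrMean (u ∘ coordProj e y) z =
      I.card / d * u (coordProj e y z) + k / d * nbrMean u (coordProj e y z) := by
  have h2k : (2 * k : ℝ≥0∞) ≠ 0 := by simp [hk.ne']
  have h2k' : (2 * k : ℝ≥0∞) ≠ ⊤ := by simp [ENNReal.mul_eq_top]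
  have halve : ∀ c : ℝ≥0∞, (2 * d : ℝ≥0∞)⁻¹ * (2 * c) = (d : ℝ≥0∞)⁻¹ * c := fun c => by
    rw [← ENNReal.div_eq_inv_mul, ← ENNReal.div_eq_inv_mul,
      ENNReal.mul_div_mul_left c d two_ne_zero ENNReal.ofNat_ne_top]
  simp only [nbrMean, Function.comp_apply]
  rw [sum_nbr_coordProj, mul_add]
  congr 1
  · rw [mul_assoc 2, halve, ENNReal.div_eq_inv_mul, mul_assoc]
  · rw [ENNReal.div_eq_inv_mul, ← halve, mul_assoc, ← mul_assoc (2 * k : ℝ≥0∞),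
      ENNReal.mul_inv_cancel h2k h2k', one_mul]

end CoordSublattice

end ZdWalk

namespace IsSRW

open ZdWalk

variable {d k : ℕ} {P : Zd d → Measure (ℕ → Zd d)} {Pk : Zd k → Measure (ℕ → Zd k)}
  {I : Finset (Fin d)}

/-- Off the sublattice, `z ↦ Pk (coordProj e y z) (hit {0})` is harmonic for the walk on `ℤ^d`,
because the projected walk is a lazy walk on `ℤ^k`. -/
theorem measure_hit_coordSublattice_le (hP : IsSRW d P) (hPk : IsSRW k Pk)
    (e : {i // i ∉ I} ≃ Fin k) (y z : Zd d) :
    P z (hit (coordSublattice I y)) ≤ Pk (coordProj e y z) (hit {0}) := by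
  have hd : (d : ℝ≥0∞) ≠ 0 := by simp [hP.dim_pos.ne']
  refine hP.measure_hit_le_of_superharmonic (v := fun z => Pk (coordProj e y z) (hit {0}))
    (fun z hz => ?_) (fun z hz => ?_) z
  · rw [(coordProj_eq_zero_iff e y).2 hz, hPk.measure_hit_of_mem (Set.mem_singleton _)]
  · have h0 : coordProj e y z ∉ ({0} : Set (Zd k)) := mt (coordProj_eq_zero_iff e y).1 hz
    have hharm := (hPk.measure_hit_of_notMem h0).trans (hPk.measure_ret _ _)
    change nbrMean ((fun x => Pk x (hit {0})) ∘ coordProj e y) z ≤ _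
    rw [nbrMean_comp_coordProj e y hPk.dim_pos, ← hharm, ← add_mul, ENNReal.div_add_div_same,
      ← Nat.cast_add, card_add_eq_of_equiv e, ENNReal.div_self hd (by simp), one_mul]

theorem measure_ret_coordSublattice_le (hP : IsSRW d P) (hPk : IsSRW k Pk)
    (e : {i // i ∉ I} ≃ Fin k) {y a : Zd d} (ha : a ∈ coordSublattice I y) :
    P a (ret (coordSublattice I y)) ≤ I.card / d + k / d * Pk 0 (ret {0}) :=
  calc P a (ret (coordSublattice I y))
      = nbrMean (fun z => P z (hit (coordSublattice I y))) a := hP.measure_ret _ _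
    _ ≤ nbrMean ((fun x => Pk x (hit {0})) ∘ coordProj e y) a :=
      nbrMean_mono (hP.measure_hit_coordSublattice_le hPk e y) a
    _ = I.card / d + k / d * Pk 0 (ret {0}) := by
      rw [nbrMean_comp_coordProj e y hPk.dim_pos, (coordProj_eq_zero_iff e y).2 ha,
        hPk.measure_hit_of_mem (Set.mem_singleton _), mul_one, hPk.measure_ret]

theorem measure_ret_coordSublattice_le_ofReal {m : ℕ} (hP : IsSRW d P)
    {Pm : Zd (d - m) → Measure (ℕ → Zd (d - m))} (hPm : IsSRW (d - m) Pm) (hI : I.card = m)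
    {y a : Zd d} (ha : a ∈ coordSublattice I y) :
    P a (ret (coordSublattice I y)) ≤
      ENNReal.ofReal (m / d + (1 - m / d) * retProb (d - m) Pm) := by
  have hcard : Fintype.card {i // i ∉ I} = d - m := by
    simp [Fintype.card_subtype_compl, hI]
  have e := Fintype.equivFinOfCardEq hcard
  have hmd : m ≤ d := by
    have := card_add_eq_of_equiv e
    omega
  have hd : (0 : ℝ) < d := by exact_mod_cast hP.dim_pos
  have hsub : 1 - (m : ℝ) / d = ((d - m : ℕ) : ℝ) / d := by
    rw [Nat.cast_sub hmd]
    field_simp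
  refine (hP.measure_ret_coordSublattice_le hPm e ha).trans_eq ?_
  have := hPm.1 0
  have hq : Pm 0 (ret {0}) = ENNReal.ofReal (retProb (d - m) Pm) :=
    (ENNReal.ofReal_toReal (measure_ne_top _ _)).symm
  have hq0 : 0 ≤ retProb (d - m) Pm := ENNReal.toReal_nonneg
  rw [hq, hsub, ENNReal.ofReal_add (by positivity) (by positivity),
    ENNReal.ofReal_mul (by positivity), ENNReal.ofReal_div_of_pos hd, ENNReal.ofReal_div_of_pos hd, hI]
  simp only [ENNReal.ofReal_natCast]

end IsSRW

namespace ZdWalk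

variable {ν : ℕ}

lemma visits_succ (A : Finset (Zd ν)) (N : ℕ) (w : ℕ → Zd ν) :
    visits A (N + 1) w = (if w 0 ∈ A then 1 else 0) + visits A N (tail w) := by
  simp only [visits, Finset.card_filter]
  rw [Finset.sum_range_succ', add_comm]
  rfl

lemma measurable_visits (A : Finset (Zd ν)) (N : ℕ) : Measurable (visits A N) := by
  change Measurable fun w : ℕ → Zd ν => ((Finset.range N).filter fun k => w k ∈ A).card
  simp only [Finset.card_filter]
  exact Finset.measurable_sum _ fun k _ =>
    .ite (measurable_pi_apply k MeasurableSet.of_discrete) measurable_const measurable_const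

lemma monotone_visits (A : Finset (Zd ν)) (w : ℕ → Zd ν) : Monotone fun N => visits A N w :=
  fun _ _ h => Finset.card_le_card (Finset.filter_subset_filter _ (Finset.range_subset_range.2 h))

lemma expOcc_eq_iSup {lam : ℝ} (hlam : 0 < lam) (A : Finset (Zd ν)) (w : ℕ → Zd ν) :
    expOcc ν lam A w = ⨆ N, ENNReal.ofReal (Real.exp lam) ^ visits A N w := by
  have hρ : 1 < ENNReal.ofReal (Real.exp lam) := by simpa using Real.one_lt_exp_iff.2 hlam
  have hmono : Monotone fun N => ENNReal.ofReal (Real.exp lam) ^ visits A N w :=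
    fun _ _ h => pow_le_pow_right₀ hρ.le (monotone_visits A w h)
  unfold expOcc
  split_ifs with h
  · have hle : ∀ N, visits A N w ≤ h.toFinset.card := fun N =>
      Finset.card_le_card fun k hk => by simpa using (Finset.mem_filter.1 hk).2
    obtain ⟨N₀, hN₀⟩ := Finset.exists_nat_subset_range h.toFinset
    have hN₀ : visits A N₀ w = h.toFinset.card := by
      refine (hle N₀).antisymm (Finset.card_le_card fun k hk => ?_)
      exact Finset.mem_filter.2 ⟨hN₀ hk, by simpa using hk⟩
    rw [mul_comm, Real.exp_nat_mul, ENNReal.ofReal_pow (Real.exp_pos lam).le, ← hN₀]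
    exact le_antisymm (le_iSup (fun N => ENNReal.ofReal (Real.exp lam) ^ visits A N w) N₀)
      (iSup_le fun N => pow_le_pow_right₀ hρ.le (hN₀ ▸ hle N))
  · have hunbdd : ∀ c, ∃ N, c ≤ visits A N w := fun c => by
      obtain ⟨t, ht, rfl⟩ := Set.Infinite.exists_subset_card_eq h c
      obtain ⟨N, hN⟩ := Finset.exists_nat_subset_range t
      exact ⟨N, Finset.card_le_card fun k hk => Finset.mem_filter.2 ⟨hN hk, ht hk⟩⟩
    refine (iSup_eq_of_tendsto hmono ?_).symm
    simp only [← ENNReal.ofReal_pow (Real.exp_pos lam).le]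
    exact ENNReal.tendsto_ofReal_atTop.comp <|
      (tendsto_pow_atTop_atTop_of_one_lt (Real.one_lt_exp_iff.2 hlam)).comp <|
        Filter.tendsto_atTop_atTop_of_monotone (monotone_visits A w) hunbdd

end ZdWalk

namespace IsSRW

open ZdWalk

variable {ν : ℕ} {P : Zd ν → Measure (ℕ → Zd ν)}

lemma lintegral_pow_visits_le (hP : IsSRW ν P) (A : Finset (Zd ν)) {ρ χ₀ K : ℝ≥0∞}
    (hret : ∀ a ∈ A, P a (ret ↑A) ≤ χ₀) (hK : ρ * (1 + K * χ₀) ≤ 1 + K) (N : ℕ) (x : Zd ν) :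
    ∫⁻ w, ρ ^ visits A N w ∂P x ≤ 1 + K * P x (hit ↑A) := by
  induction N generalizing x with
  | zero =>
    have := hP.1 x
    simp [visits]
  | succ N ih =>
    have hmeas : Measurable fun w => ρ ^ visits A N w :=
      measurable_from_nat.comp (measurable_visits A N)
    have hstep : ∫⁻ w, ρ ^ visits A (N + 1) w ∂P x =
        ρ ^ (if x ∈ A then 1 else 0) * nbrMean (fun y => ∫⁻ w, ρ ^ visits A N w ∂P y) x := by
      rw [← hP.lintegral_comp_tail hmeas,
        ← lintegral_const_mul (f := fun w => ρ ^ visits A N (tail w)) _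
          (hmeas.comp measurable_tail)]
      refine lintegral_congr_ae ((hP.ae_start x).mono fun w hw => ?_)
      simp only [visits_succ, hw, pow_add]
    have hmean : nbrMean (fun y => ∫⁻ w, ρ ^ visits A N w ∂P y) x ≤ 1 + K * P x (ret ↑A) := by
      rw [hP.measure_ret, ← nbrMean_const_add_mul hP.dim_pos]
      exact nbrMean_mono ih x
    rw [hstep]
    by_cases hx : x ∈ A
    · rw [if_pos hx, pow_one, hP.measure_hit_of_mem (S := ↑A) hx, mul_one]
      calc ρ * nbrMean (fun y => ∫⁻ w, ρ ^ visits A N w ∂P y) x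
          ≤ ρ * (1 + K * χ₀) := by grw [hmean, hret x hx]
        _ ≤ 1 + K := hK
    · rw [if_neg hx, pow_zero, one_mul, hP.measure_hit_of_notMem (S := ↑A) hx]
      exact hmean

lemma lintegral_expOcc_le (hP : IsSRW ν P) {A : Finset (Zd ν)} {lam : ℝ} (hlam : 0 < lam)
    {χ₀ K : ℝ≥0∞} (hret : ∀ a ∈ A, P a (ret ↑A) ≤ χ₀)
    (hK : ENNReal.ofReal (Real.exp lam) * (1 + K * χ₀) ≤ 1 + K) (x : Zd ν) :
    ∫⁻ w, expOcc ν lam A w ∂P x ≤ 1 + K := by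
  have hρ : 1 ≤ ENNReal.ofReal (Real.exp lam) := by simpa using (Real.one_lt_exp_iff.2 hlam).le
  have := hP.1 x
  simp_rw [expOcc_eq_iSup hlam]
  rw [lintegral_iSup (f := fun N w => ENNReal.ofReal (Real.exp lam) ^ visits A N w)
    (fun N => measurable_from_nat.comp (measurable_visits A N))
    fun _ _ h w => pow_le_pow_right₀ hρ (monotone_visits A w h)]
  refine iSup_le fun N => (hP.lintegral_pow_visits_le A hret hK N x).trans ?_
  gcongr
  exact mul_le_of_le_one_right' prob_le_one

end IsSRW

/-- `K = (ρ - 1) / (1 - ρ χ₀)` is the solution of `ρ (1 + K χ₀) = 1 + K`. -/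
lemma ofReal_mul_one_add_div_mul_le {ρ χ₀ : ℝ} (hρ : 1 ≤ ρ) (hχ₀ : 0 ≤ χ₀) (h : ρ * χ₀ < 1) :
    ENNReal.ofReal ρ * (1 + ENNReal.ofReal ((ρ - 1) / (1 - ρ * χ₀)) * ENNReal.ofReal χ₀) ≤
      1 + ENNReal.ofReal ((ρ - 1) / (1 - ρ * χ₀)) := by
  set K := (ρ - 1) / (1 - ρ * χ₀)
  have hK : 0 ≤ K := div_nonneg (by linarith) (by linarith)
  have hKχ : K * (1 - ρ * χ₀) = ρ - 1 := div_mul_cancel₀ _ (by linarith)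
  rw [← ENNReal.ofReal_mul hK, ← ENNReal.ofReal_one, ← ENNReal.ofReal_add zero_le_one
    (by positivity), ← ENNReal.ofReal_mul (by linarith), ← ENNReal.ofReal_add zero_le_one hK]
  exact ENNReal.ofReal_le_ofReal (le_of_eq (by linear_combination -hKχ))

theorem exp_moment_occupation_general
    (d m : ℕ)
    (P : Zd d → Measure (ℕ → Zd d)) (hP : IsSRW d P)
    (Pm : Zd (d - m) → Measure (ℕ → Zd (d - m))) (hPm : IsSRW (d - m) Pm)
    (lam : ℝ) (hlam : 0 < lam)
    (hchi : chiVal d m (retProb (d - m) Pm) lam < 1)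
    (I : Finset (Fin d)) (hI : I.card = m) (y : Zd d)
    (A : Finset (Zd d)) (hA : ∀ z ∈ A, ∀ i : Fin d, i ∉ I → z i = y i) :
    (∀ x : Zd d,
        (∫⁻ w, expOcc d lam A w ∂(P x))
          ≤ ENNReal.ofReal (1 + (Real.exp lam - 1)
              / (1 - chiVal d m (retProb (d - m) Pm) lam)))
    ∧ (∑ x ∈ A, eqm d P A x * ((∫⁻ w, expOcc d lam A w ∂(P x)) - 1))
        ≤ capa d P A * ENNReal.ofReal ((Real.exp lam - 1)
            / (1 - chiVal d m (retProb (d - m) Pm) lam)) := by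
  set q := retProb (d - m) Pm
  set χ₀ : ℝ := m / d + (1 - m / d) * q
  set K : ℝ := (Real.exp lam - 1) / (1 - chiVal d m q lam)
  have hret : ∀ a ∈ A, P a (ZdWalk.ret ↑A) ≤ ENNReal.ofReal χ₀ := fun a ha =>
    (measure_mono (show ZdWalk.ret ↑A ⊆ ZdWalk.ret (ZdWalk.coordSublattice I y) from
      fun _ ⟨k, hk, hw⟩ => ⟨k, hk, hA _ hw⟩)).trans
      (hP.measure_ret_coordSublattice_le_ofReal hPm hI (hA a ha))
  have hmd : (m : ℝ) / d ≤ 1 := div_le_one_of_le₀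
    (by exact_mod_cast hI ▸ (Finset.card_le_univ I).trans_eq (Fintype.card_fin d)) d.cast_nonneg
  have hχ₀ : 0 ≤ χ₀ := add_nonneg (by positivity) (mul_nonneg (by linarith) ENNReal.toReal_nonneg)
  have hρ : 1 ≤ Real.exp lam := Real.one_le_exp hlam.le
  have hK : 0 ≤ K := div_nonneg (by linarith) (by linarith)
  have hbound x : ∫⁻ w, expOcc d lam A w ∂P x ≤ 1 + ENNReal.ofReal K :=
    hP.lintegral_expOcc_le hlam hret (ofReal_mul_one_add_div_mul_le hρ hχ₀ hchi) x
  refine ⟨fun x => (hbound x).trans_eq (by rw [ENNReal.ofReal_add zero_le_one hK,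
    ENNReal.ofReal_one]), ?_⟩
  calc ∑ x ∈ A, eqm d P A x * ((∫⁻ w, expOcc d lam A w ∂P x) - 1)
      ≤ ∑ x ∈ A, eqm d P A x * ENNReal.ofReal K := by
        gcongr with x
        exact tsub_le_iff_left.2 (hbound x)
    _ = capa d P A * ENNReal.ofReal K := (Finset.sum_mul _ _ _).symm

/-- **Theorem 2.4, (2.22)/(2.28).** For `d ≥ 4`, `1 ≤ m ≤ d − 3` and `λ > 0` with
`χ(λ) < 1`, and `A` a finite subset of an `m`-dimensional coordinate affine sublattice
`F = y + Σ_{i∈I} ℤ e_i`, one has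
`sup_x E_x[exp(λ f_A)] ≤ 1 + (e^λ − 1)/(1 − χ(λ))` and hence
`E_{e_A}[exp(λ f_A) − 1] ≤ cap(A)·(e^λ − 1)/(1 − χ(λ))`. -/
theorem exp_moment_occupation
    (d m : ℕ) (hd : 4 ≤ d) (hm1 : 1 ≤ m) (hm2 : m ≤ d - 3)
    (P : Zd d → Measure (ℕ → Zd d)) (hP : IsSRW d P)
    (Pm : Zd (d - m) → Measure (ℕ → Zd (d - m))) (hPm : IsSRW (d - m) Pm)
    (lam : ℝ) (hlam : 0 < lam)
    (hchi : chiVal d m (retProb (d - m) Pm) lam < 1)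
    (I : Finset (Fin d)) (hI : I.card = m) (y : Zd d)
    (A : Finset (Zd d)) (hA : ∀ z ∈ A, ∀ i : Fin d, i ∉ I → z i = y i) :
    (∀ x : Zd d,
        (∫⁻ w, expOcc d lam A w ∂(P x))
          ≤ ENNReal.ofReal (1 + (Real.exp lam - 1)
              / (1 - chiVal d m (retProb (d - m) Pm) lam)))
    ∧ (∑ x ∈ A, eqm d P A x * ((∫⁻ w, expOcc d lam A w ∂(P x)) - 1))
        ≤ capa d P A * ENNReal.ofReal ((Real.exp lam - 1)
            / (1 - chiVal d m (retProb (d - m) Pm) lam)) :=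
  exp_moment_occupation_general d m P hP Pm hPm lam hlam hchi I hI y A hA
end
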